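/- Let u(·, t) be a smooth 2π-periodic solution of π∂_t u = ψ∂_x u − φΛu with ψ = Hu/(u² + (Hu)²) and φ = u/(u² + (Hu)²), with initial data satisfying 0 < m₀ ≤ u₀(x) ≤ M₀. Then for all t in the existence interval, m₀ ≤ u(x, t) ≤ M₀ for all x (maximum principle). -/

import Mathlib

open Real Set Filter Topology MeasureTheory intervalIntegral
namespace MP


lemma sin_half_pos {z : ℝ} (h0 : 0 < z) (hp : z ≤ π) : 0 < Real.sin (z/2) :=
  Real.sin_pos_of_pos_of_lt_pi (by linarith) (by linarith [Real.pi_pos])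

/-- a continuous `2π`-periodic function is bounded. -/
lemma bound_of_periodic {φ : ℝ → ℝ} (hc : Continuous φ) (hp : Function.Periodic φ (2*π)) :
    ∃ C : ℝ, 0 ≤ C ∧ ∀ x, |φ x| ≤ C := by
  obtain ⟨C, hC⟩ := (isCompact_Icc (a := (0:ℝ)) (b := 2*π)).exists_bound_of_continuousOn
    hc.continuousOn
  refine ⟨max C 0, le_max_right _ _, fun x => ?_⟩
  obtain ⟨y, hy, hxy⟩ := hp.exists_mem_Ico₀ (by positivity) x
  rw [hxy]
  exact le_trans (hC y ⟨hy.1, hy.2.le⟩) (le_max_left _ _)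

lemma periodic_deriv {φ : ℝ → ℝ} (hp : Function.Periodic φ (2*π)) :
    Function.Periodic (deriv φ) (2*π) := by
  intro x
  have h1 : deriv φ (x + 2*π) = deriv (fun y => φ (y + 2*π)) x := (deriv_comp_add_const φ _ x).symm
  rw [h1]
  congr 1
  funext y
  rw [hp y]



lemma integral_sub_Ioo (f : ℝ → ℝ) (hf : Continuous f) (x : ℝ) {ε : ℝ}
    (h0 : 0 < ε) (hε : ε < π) :
    (∫ y in Ioo (x - π) (x + π) \ Ioo (x - ε) (x + ε),
        f y * (Real.cos ((x - y)/2) / Real.sin ((x - y)/2)))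
      = ∫ z in ε..π, (f (x - z) - f (x + z)) * (Real.cos (z/2) / Real.sin (z/2)) := by
  have hπ := Real.pi_pos
  set G : ℝ → ℝ := fun y => f y * (Real.cos ((x - y)/2) / Real.sin ((x - y)/2)) with hG
  have hcos : Continuous fun y : ℝ => Real.cos ((x - y)/2) := by fun_prop
  have hsin : Continuous fun y : ℝ => Real.sin ((x - y)/2) := by fun_prop
  have hsets : Ioo (x - π) (x + π) \ Ioo (x - ε) (x + ε)
      = Ioc (x - π) (x - ε) ∪ Ico (x + ε) (x + π) := by
    ext y
    simp only [mem_diff, mem_Ioo, mem_union, mem_Ioc, mem_Ico, not_and, not_lt]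
    constructor
    · rintro ⟨⟨h1, h2⟩, h3⟩
      rcases le_or_gt y (x - ε) with h | h
      · exact Or.inl ⟨h1, h⟩
      · exact Or.inr ⟨h3 h, h2⟩
    · rintro (⟨h1, h2⟩ | ⟨h1, h2⟩)
      · exact ⟨⟨h1, by linarith⟩, fun hy => by linarith⟩
      · exact ⟨⟨by linarith, h2⟩, fun hy => by linarith⟩
  have hcont1 : ContinuousOn G (Icc (x - π) (x - ε)) := by
    apply hf.continuousOn.mul (hcos.continuousOn.div hsin.continuousOn ?_)
    intro y hy
    simp only [mem_Icc] at hy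
    exact (sin_half_pos (by linarith [hy.2]) (by linarith [hy.1])).ne'
  have hcont2 : ContinuousOn G (Icc (x + ε) (x + π)) := by
    apply hf.continuousOn.mul (hcos.continuousOn.div hsin.continuousOn ?_)
    intro y hy
    simp only [mem_Icc] at hy
    have h2 : Real.sin ((x - y)/2) = -Real.sin ((y - x)/2) := by
      rw [← Real.sin_neg]; ring_nf
    rw [h2, neg_ne_zero]
    exact (sin_half_pos (by linarith) (by linarith)).ne'
  have hi1 : IntegrableOn G (Ioc (x - π) (x - ε)) :=
    (hcont1.integrableOn_Icc).mono_set Ioc_subset_Icc_self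
  have hi2 : IntegrableOn G (Ico (x + ε) (x + π)) :=
    (hcont2.integrableOn_Icc).mono_set Ico_subset_Icc_self
  have hdisj : Disjoint (Ioc (x - π) (x - ε)) (Ico (x + ε) (x + π)) := by
    rw [Set.disjoint_left]
    intro y hy hy'
    simp only [mem_Ioc, mem_Ico] at hy hy'
    linarith [hy.2, hy'.1]
  rw [hsets, setIntegral_union hdisj measurableSet_Ico hi1 hi2]
  have e1 : (∫ y in Ioc (x - π) (x - ε), G y) = ∫ y in (x - π)..(x - ε), G y :=
    (intervalIntegral.integral_of_le (by linarith)).symm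
  have e2 : (∫ y in Ico (x + ε) (x + π), G y) = ∫ y in (x + ε)..(x + π), G y := by
    rw [MeasureTheory.Measure.restrict_congr_set Ico_ae_eq_Ioc]
    exact (intervalIntegral.integral_of_le (by linarith)).symm
  rw [e1, e2, ← intervalIntegral.integral_comp_sub_left G x,
    ← intervalIntegral.integral_comp_add_left G x]
  have hic : ∀ z ∈ Set.uIcc ε π, Real.sin (z/2) ≠ 0 := by
    intro z hz
    rw [Set.uIcc_of_le (by linarith)] at hz
    simp only [mem_Icc] at hz
    exact (sin_half_pos (by linarith) (by linarith)).ne'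
  have hcot : ContinuousOn (fun z : ℝ => Real.cos (z/2) / Real.sin (z/2)) (Set.uIcc ε π) :=
    (by fun_prop : Continuous fun z : ℝ => Real.cos (z/2)).continuousOn.div
      (by fun_prop : Continuous fun z : ℝ => Real.sin (z/2)).continuousOn hic
  have hint1 : IntervalIntegrable (fun z => f (x - z) * (Real.cos (z/2) / Real.sin (z/2)))
      volume ε π :=
    ContinuousOn.intervalIntegrable ((hf.comp (by fun_prop)).continuousOn.mul hcot)
  have hint2 : IntervalIntegrable (fun z => f (x + z) * (Real.cos (z/2) / Real.sin (z/2)))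
      volume ε π :=
    ContinuousOn.intervalIntegrable ((hf.comp (by fun_prop)).continuousOn.mul hcot)
  have g1 : ∀ z : ℝ, G (x - z) = f (x - z) * (Real.cos (z/2) / Real.sin (z/2)) := by
    intro z; simp only [hG]; norm_num
  have g2 : ∀ z : ℝ, G (x + z) = -(f (x + z) * (Real.cos (z/2) / Real.sin (z/2))) := by
    intro z
    simp only [hG]
    have h1 : (x - (x + z))/2 = -(z/2) := by ring
    rw [h1, Real.cos_neg, Real.sin_neg, div_neg, mul_neg]
  rw [intervalIntegral.integral_congr (fun z _ => g1 z),
    intervalIntegral.integral_congr (fun z _ => g2 z),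
    intervalIntegral.integral_neg, ← sub_eq_add_neg]
  rw [← intervalIntegral.integral_sub hint1 hint2]
  congr 1
  funext z
  ring



lemma sin_half_pos' {z : ℝ} (h0 : 0 < z) (hp : z ≤ π) : 0 < Real.sin (z/2) :=
  Real.sin_pos_of_pos_of_lt_pi (by linarith) (by linarith [Real.pi_pos])

lemma cot_half_nonneg' {z : ℝ} (h0 : 0 < z) (hp : z ≤ π) :
    0 ≤ Real.cos (z/2) / Real.sin (z/2) :=
  div_nonneg (Real.cos_nonneg_of_mem_Icc ⟨by linarith [Real.pi_pos], by linarith⟩)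
    (sin_half_pos' h0 hp).le

lemma cot_half_le' {z : ℝ} (h0 : 0 < z) (hp : z ≤ π) :
    Real.cos (z/2) / Real.sin (z/2) ≤ 2 / z := by
  rcases eq_or_lt_of_le hp with rfl | hlt
  · rw [Real.cos_pi_div_two, zero_div]
    positivity
  · have hs := sin_half_pos' h0 hp
    have hc : 0 < Real.cos (z/2) :=
      Real.cos_pos_of_mem_Ioo ⟨by linarith [Real.pi_pos], by linarith⟩
    have ht := Real.lt_tan (x := z/2) (by linarith) (by linarith)
    rw [Real.tan_eq_sin_div_cos, lt_div_iff₀ hc] at ht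
    rw [div_le_div_iff₀ hs h0]
    nlinarith

/-- pointwise bound on a "symmetric difference times cotangent" kernel. -/
lemma kernel_bound {φ : ℝ → ℝ} {C : ℝ} (hd : Differentiable ℝ φ)
    (hC : ∀ y, |deriv φ y| ≤ C) (x : ℝ) {z : ℝ} (h0 : 0 < z) (hp : z ≤ π) :
    |(φ (x - z) - φ (x + z)) * (Real.cos (z/2) / Real.sin (z/2))| ≤ 4 * C := by
  have hC0 : 0 ≤ C := le_trans (abs_nonneg _) (hC 0)
  have hlip : |φ (x - z) - φ (x + z)| ≤ C * (2 * z) := by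
    have := Convex.norm_image_sub_le_of_norm_deriv_le (s := Set.univ)
      (fun y _ => hd y) (fun y _ => by rw [Real.norm_eq_abs]; exact hC y) convex_univ
      (Set.mem_univ (x + z)) (Set.mem_univ (x - z))
    rw [Real.norm_eq_abs, Real.norm_eq_abs] at this
    have h2 : |x - z - (x + z)| = 2 * z := by
      rw [show x - z - (x + z) = -(2*z) by ring, abs_neg, abs_of_nonneg (by linarith)]
    rw [h2] at this
    exact this
  have hcot0 := cot_half_nonneg' h0 hp
  have hcot2 := cot_half_le' h0 hp
  rw [abs_mul, abs_of_nonneg hcot0]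
  calc |φ (x - z) - φ (x + z)| * (Real.cos (z/2) / Real.sin (z/2))
      ≤ (C * (2 * z)) * (2 / z) := by
        apply mul_le_mul hlip hcot2 hcot0 (by positivity)
    _ = 4 * C := by field_simp; ring
  
/-- integrability of bounded a.e.-defined kernels on `(0, π]`-type intervals. -/
lemma intervalIntegrable_of_bounded {k : ℝ → ℝ} {C : ℝ}
    (hcont : ContinuousOn k (Ioc 0 π))
    (hb : ∀ z ∈ Ioc (0:ℝ) π, |k z| ≤ C) :
    IntervalIntegrable k volume 0 π := by
  have hπ := Real.pi_pos
  rw [intervalIntegrable_iff_integrableOn_Ioc_of_le hπ.le]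
  have : IsFiniteMeasure (volume.restrict (Ioc (0:ℝ) π)) :=
    ⟨by rw [Measure.restrict_apply_univ]; exact measure_Ioc_lt_top⟩
  refine ⟨hcont.aestronglyMeasurable measurableSet_Ioc, HasFiniteIntegral.of_bounded (C := C) ?_⟩
  filter_upwards [ae_restrict_mem measurableSet_Ioc] with z hz
  simpa using hb z hz

/-- truncated integrals tend to the full integral for bounded kernels. -/
lemma tendsto_trunc {k : ℝ → ℝ} {C : ℝ}
    (hii : IntervalIntegrable k volume 0 π)
    (hb : ∀ z ∈ Ioc (0:ℝ) π, |k z| ≤ C) :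
    Tendsto (fun ε => ∫ z in ε..π, k z) (𝓝[>] (0:ℝ)) (𝓝 (∫ z in (0:ℝ)..π, k z)) := by
  have hπ := Real.pi_pos
  have hmem : Ioo (0:ℝ) π ∈ 𝓝[>] (0:ℝ) := Ioo_mem_nhdsGT_of_mem ⟨le_refl _, hπ⟩
  have key : ∀ ε ∈ Ioo (0:ℝ) π,
      (∫ z in ε..π, k z) = (∫ z in (0:ℝ)..π, k z) - ∫ z in (0:ℝ)..ε, k z := by
    intro ε hε
    have h1 : IntervalIntegrable k volume 0 ε := by
      apply hii.mono_set
      rw [Set.uIcc_of_le hε.1.le, Set.uIcc_of_le hπ.le]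
      exact Icc_subset_Icc le_rfl hε.2.le
    have h2 : IntervalIntegrable k volume ε π := by
      apply hii.mono_set
      rw [Set.uIcc_of_le hε.2.le, Set.uIcc_of_le hπ.le]
      exact Icc_subset_Icc hε.1.le le_rfl
    rw [← intervalIntegral.integral_add_adjacent_intervals h1 h2]
    ring
  have hz : Tendsto (fun ε => ∫ z in (0:ℝ)..ε, k z) (𝓝[>] (0:ℝ)) (𝓝 0) := by
    apply squeeze_zero_norm'
    · filter_upwards [hmem] with ε hε
      have : ∀ z ∈ Set.uIoc (0:ℝ) ε, ‖k z‖ ≤ C := by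
        intro z hz
        rw [Set.uIoc_of_le hε.1.le] at hz
        exact hb z ⟨hz.1, hz.2.trans hε.2.le⟩
      calc ‖∫ z in (0:ℝ)..ε, k z‖ ≤ C * |ε - 0| :=
            intervalIntegral.norm_integral_le_of_norm_le_const this
        _ = C * ε := by rw [sub_zero, abs_of_nonneg hε.1.le]
    · have : Tendsto (fun ε : ℝ => C * ε) (𝓝[>] (0:ℝ)) (𝓝 (C * 0)) :=
        (tendsto_const_nhds.mul Filter.tendsto_id).mono_left nhdsWithin_le_nhds
      simpa using this
  have := (tendsto_const_nhds (x := ∫ z in (0:ℝ)..π, k z)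
      (f := 𝓝[>] (0:ℝ))).sub hz
  rw [sub_zero] at this
  exact this.congr' (by filter_upwards [hmem] with ε hε; exact (key ε hε).symm)


section core
variable {f : ℝ → ℝ}

lemma kk_contOn {φ : ℝ → ℝ} (hc : Continuous φ) (x : ℝ) :
    ContinuousOn (fun z => (φ (x - z) - φ (x + z)) * (Real.cos (z/2) / Real.sin (z/2)))
      (Ioc 0 π) := by
  apply ContinuousOn.mul (by fun_prop)
  apply ContinuousOn.div (by fun_prop) (by fun_prop)
  intro z hz
  exact (sin_half_pos' hz.1 hz.2).ne'

lemma kk_ii {φ : ℝ → ℝ} (hd : Differentiable ℝ φ) {C : ℝ} (hC : ∀ y, |deriv φ y| ≤ C) (x : ℝ) :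
    IntervalIntegrable (fun z => (φ (x - z) - φ (x + z)) * (Real.cos (z/2) / Real.sin (z/2)))
      volume 0 π :=
  intervalIntegrable_of_bounded (kk_contOn hd.continuous x)
    (fun z hz => kernel_bound hd hC x hz.1 hz.2)

lemma kk_tendsto {φ : ℝ → ℝ} (hd : Differentiable ℝ φ) {C : ℝ} (hC : ∀ y, |deriv φ y| ≤ C)
    (x : ℝ) :
    Tendsto (fun ε => ∫ z in ε..π,
        (φ (x - z) - φ (x + z)) * (Real.cos (z/2) / Real.sin (z/2))) (𝓝[>] (0:ℝ))
      (𝓝 (∫ z in (0:ℝ)..π, (φ (x - z) - φ (x + z)) * (Real.cos (z/2) / Real.sin (z/2)))) :=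
  tendsto_trunc (kk_ii hd hC x) (fun z hz => kernel_bound hd hC x hz.1 hz.2)

lemma g_eq {f g : ℝ → ℝ} (hf : ContDiff ℝ ((⊤ : ℕ∞) : WithTop ℕ∞) f) (hp : Function.Periodic f (2*π))
    (hg : ∀ x : ℝ, Filter.Tendsto (fun ε : ℝ =>
        (1/(2*π)) * ∫ y in Set.Ioo (x - π) (x + π) \ Set.Ioo (x - ε) (x + ε),
          f y * (Real.cos ((x - y)/2) / Real.sin ((x - y)/2)))
        (𝓝[>] 0) (𝓝 (g x))) :
    g = fun x => (1/(2*π)) * ∫ z in (0:ℝ)..π,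
        (f (x - z) - f (x + z)) * (Real.cos (z/2) / Real.sin (z/2)) := by
  funext x
  have hd : Differentiable ℝ f := (contDiff_infty_iff_deriv.mp hf).1
  have hd' : ContDiff ℝ ((⊤ : ℕ∞) : WithTop ℕ∞) (deriv f) := (contDiff_infty_iff_deriv.mp hf).2
  obtain ⟨C, hC0, hC⟩ := bound_of_periodic hd'.continuous (periodic_deriv hp)
  have h2 : Tendsto (fun ε : ℝ => (1/(2*π)) * ∫ z in ε..π,
      (f (x - z) - f (x + z)) * (Real.cos (z/2) / Real.sin (z/2))) (𝓝[>] (0:ℝ))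
      (𝓝 ((1/(2*π)) * ∫ z in (0:ℝ)..π,
        (f (x - z) - f (x + z)) * (Real.cos (z/2) / Real.sin (z/2)))) :=
    (kk_tendsto hd hC x).const_mul _
  refine tendsto_nhds_unique ((hg x).congr' ?_) h2
  filter_upwards [Ioo_mem_nhdsGT_of_mem ⟨le_refl (0:ℝ), Real.pi_pos⟩] with ε hε
  rw [integral_sub_Ioo f hd.continuous x hε.1 hε.2]

lemma J_hasDerivAt (hf : ContDiff ℝ ((⊤ : ℕ∞) : WithTop ℕ∞) f) (hp : Function.Periodic f (2*π)) (x : ℝ) :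
    HasDerivAt (fun x' => ∫ z in (0:ℝ)..π,
        (f (x' - z) - f (x' + z)) * (Real.cos (z/2) / Real.sin (z/2)))
      (∫ z in (0:ℝ)..π,
        (deriv f (x - z) - deriv f (x + z)) * (Real.cos (z/2) / Real.sin (z/2))) x := by
  have hπ := Real.pi_pos
  have hd : Differentiable ℝ f := (contDiff_infty_iff_deriv.mp hf).1
  have hd1 : ContDiff ℝ ((⊤ : ℕ∞) : WithTop ℕ∞) (deriv f) := (contDiff_infty_iff_deriv.mp hf).2
  have hdd : Differentiable ℝ (deriv f) := (contDiff_infty_iff_deriv.mp hd1).1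
  have hd2 : ContDiff ℝ ((⊤ : ℕ∞) : WithTop ℕ∞) (deriv (deriv f)) := (contDiff_infty_iff_deriv.mp hd1).2
  obtain ⟨C₂, hC₂0, hC₂⟩ := bound_of_periodic hd2.continuous (periodic_deriv (periodic_deriv hp))
  obtain ⟨C₁, hC₁0, hC₁⟩ := bound_of_periodic hd1.continuous (periodic_deriv hp)
  have hfd : ∀ y, HasDerivAt f (deriv f y) y := fun y => (hd y).hasDerivAt
  have huIoc : Set.uIoc (0:ℝ) π = Set.Ioc 0 π := Set.uIoc_of_le hπ.le
  apply (intervalIntegral.hasDerivAt_integral_of_dominated_loc_of_deriv_le (s := Metric.ball x 1) (Metric.ball_mem_nhds x one_pos)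
    (F := fun x' z => (f (x' - z) - f (x' + z)) * (Real.cos (z/2) / Real.sin (z/2)))
    (F' := fun x' z => (deriv f (x' - z) - deriv f (x' + z)) * (Real.cos (z/2) / Real.sin (z/2)))
    (bound := fun _ => 4 * C₂) ?_ ?_ ?_ ?_ ?_ ?_).2
  · filter_upwards with x'
    rw [huIoc]
    exact (kk_contOn hd.continuous x').aestronglyMeasurable measurableSet_Ioc
  · exact kk_ii hd hC₁ x
  · rw [huIoc]
    exact (kk_contOn hdd.continuous x).aestronglyMeasurable measurableSet_Ioc
  · filter_upwards with z hz x' _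
    rw [huIoc] at hz
    rw [Real.norm_eq_abs]
    exact kernel_bound hdd hC₂ x' hz.1 hz.2
  · exact intervalIntegrable_const
  · filter_upwards with z hz x' _
    rw [huIoc] at hz
    have h1 : HasDerivAt (fun w => f (w - z)) (deriv f (x' - z)) x' := by
      simpa [Function.comp_def] using (hfd (x' - z)).comp x' ((hasDerivAt_id x').sub_const z)
    have h2 : HasDerivAt (fun w => f (w + z)) (deriv f (x' + z)) x' := by
      simpa [Function.comp_def] using (hfd (x' + z)).comp x' ((hasDerivAt_id x').add_const z)
    exact (h1.sub h2).mul_const _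


lemma Jderiv_nonneg (hf : ContDiff ℝ ((⊤ : ℕ∞) : WithTop ℕ∞) f)
    (hp : Function.Periodic f (2*π)) {x : ℝ} (hmax : ∀ y, f y ≤ f x) :
    0 ≤ ∫ z in (0:ℝ)..π,
      (deriv f (x - z) - deriv f (x + z)) * (Real.cos (z/2) / Real.sin (z/2)) := by
  have hπ := Real.pi_pos
  have hd : Differentiable ℝ f := (contDiff_infty_iff_deriv.mp hf).1
  have hd1 : ContDiff ℝ ((⊤ : ℕ∞) : WithTop ℕ∞) (deriv f) := (contDiff_infty_iff_deriv.mp hf).2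
  have hdd : Differentiable ℝ (deriv f) := (contDiff_infty_iff_deriv.mp hd1).1
  have hd2 : ContDiff ℝ ((⊤ : ℕ∞) : WithTop ℕ∞) (deriv (deriv f)) :=
    (contDiff_infty_iff_deriv.mp hd1).2
  obtain ⟨C₂, hC₂0, hC₂⟩ := bound_of_periodic hd2.continuous (periodic_deriv (periodic_deriv hp))
  have hfd : ∀ y, HasDerivAt f (deriv f y) y := fun y => (hd y).hasDerivAt
  have hfd' : ∀ y, HasDerivAt (deriv f) (deriv (deriv f) y) y := fun y => (hdd y).hasDerivAt
  set a : ℝ → ℝ := fun z => f (x + z) + f (x - z) - 2 * f x with ha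
  set a' : ℝ → ℝ := fun z => deriv f (x + z) - deriv f (x - z) with ha'
  have hUd : ∀ z : ℝ, HasDerivAt a (a' z) z := by
    intro z
    have h1 : HasDerivAt (fun w => f (x + w)) (deriv f (x + z)) z := by
      simpa [Function.comp_def] using (hfd (x + z)).comp z ((hasDerivAt_id z).const_add x)
    have h2 : HasDerivAt (fun w => f (x - w)) (-deriv f (x - z)) z := by
      simpa [Function.comp_def] using (hfd (x - z)).comp z ((hasDerivAt_id z).const_sub x)
    have := (h1.add h2).sub_const (2 * f x)
    simpa [ha, ha', sub_eq_add_neg] using this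
  have hanonpos : ∀ z : ℝ, a z ≤ 0 := by
    intro z
    have := hmax (x + z)
    have := hmax (x - z)
    simp only [ha]
    linarith
  have habound : ∀ δ : ℝ, 0 < δ → |a δ| ≤ 2 * C₂ * δ^2 := by
    intro δ hδ
    have hda : ∀ s ∈ Icc (0:ℝ) δ, ‖deriv a s‖ ≤ 2 * C₂ * δ := by
      intro s hs
      rw [(hUd s).deriv, Real.norm_eq_abs]
      have hmv : |deriv f (x + s) - deriv f (x - s)| ≤ C₂ * (2 * s) := by
        have h2s : |x + s - (x - s)| = 2 * s := by
          rw [show x + s - (x - s) = 2 * s by ring]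
          exact abs_of_nonneg (by linarith [hs.1])
        have := Convex.norm_image_sub_le_of_norm_deriv_le (s := Set.univ) (f := deriv f)
          (fun y _ => hdd y) (fun y _ => by rw [Real.norm_eq_abs]; exact hC₂ y) convex_univ
          (Set.mem_univ (x - s)) (Set.mem_univ (x + s))
        rwa [Real.norm_eq_abs, Real.norm_eq_abs, h2s] at this
      calc |a' s| ≤ C₂ * (2 * s) := hmv
        _ ≤ 2 * C₂ * δ := by nlinarith [hs.2, hs.1]
    have := Convex.norm_image_sub_le_of_norm_deriv_le (s := Icc (0:ℝ) δ) (f := a)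
      (fun s hs => (hUd s).differentiableAt) hda (convex_Icc _ _)
      (Set.left_mem_Icc.mpr hδ.le) (Set.right_mem_Icc.mpr hδ.le)
    have ha0 : a 0 = 0 := by simp [ha]; ring
    rw [ha0, sub_zero, Real.norm_eq_abs, Real.norm_eq_abs, sub_zero,
      abs_of_nonneg hδ.le] at this
    calc |a δ| ≤ 2 * C₂ * δ * δ := this
      _ = 2 * C₂ * δ^2 := by ring
  have hlow : ∀ δ ∈ Ioo (0:ℝ) π, -(4 * C₂ * δ) ≤ ∫ z in δ..π,
      (deriv f (x - z) - deriv f (x + z)) * (Real.cos (z/2) / Real.sin (z/2)) := by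
    intro δ hδ
    set V : ℝ → ℝ := fun z => Real.cos (z/2) / Real.sin (z/2) with hV
    set V' : ℝ → ℝ := fun z => -(1/(2 * Real.sin (z/2)^2)) with hV'
    have hsne : ∀ z ∈ Set.uIcc δ π, Real.sin (z/2) ≠ 0 := by
      intro z hz
      rw [Set.uIcc_of_le hδ.2.le] at hz
      exact (sin_half_pos' (lt_of_lt_of_le hδ.1 hz.1) hz.2).ne'
    have hVd : ∀ z ∈ Set.uIcc δ π, HasDerivAt V (V' z) z := by
      intro z hz
      have hne := hsne z hz
      have hhalf : HasDerivAt (fun w : ℝ => w/2) (1/2) z := (hasDerivAt_id z).div_const 2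
      have hcos : HasDerivAt (fun w : ℝ => Real.cos (w/2)) (-Real.sin (z/2) * (1/2)) z :=
        by simpa [Function.comp_def] using (Real.hasDerivAt_cos (z/2)).comp z hhalf
      have hsin : HasDerivAt (fun w : ℝ => Real.sin (w/2)) (Real.cos (z/2) * (1/2)) z :=
        by simpa [Function.comp_def] using (Real.hasDerivAt_sin (z/2)).comp z hhalf
      have h : HasDerivAt (fun w => Real.cos (w/2) / Real.sin (w/2)) _ z := hcos.div hsin hne
      convert h using 1
      have hpyth := Real.sin_sq_add_cos_sq (z/2)
      simp only [hV']
      field_simp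
      nlinarith [hpyth]
    have ha'cont : Continuous a' := by
      rw [ha']
      exact ((hd1.continuous).comp (continuous_const.add continuous_id)).sub
        ((hd1.continuous).comp (continuous_const.sub continuous_id))
    have ha'int : IntervalIntegrable a' volume δ π := ha'cont.intervalIntegrable _ _
    have hV'int : IntervalIntegrable V' volume δ π := by
      apply ContinuousOn.intervalIntegrable
      apply ContinuousOn.neg
      apply ContinuousOn.div continuousOn_const (by fun_prop)
      intro z hz
      have h1 := hsne z hz
      positivity
    have hIBP := intervalIntegral.integral_mul_deriv_eq_deriv_mul hVd
      (fun z _ => hUd z) hV'int ha'int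
    have hVπ : V π = 0 := by
      simp [hV, Real.cos_pi_div_two]
    have hEq : (∫ z in δ..π,
        (deriv f (x - z) - deriv f (x + z)) * (Real.cos (z/2) / Real.sin (z/2)))
        = -∫ z in δ..π, V z * a' z := by
      rw [← intervalIntegral.integral_neg]
      apply intervalIntegral.integral_congr
      intro z _
      simp only [ha', hV]
      ring
    have hI2 : 0 ≤ ∫ z in δ..π, V' z * a z := by
      apply intervalIntegral.integral_nonneg hδ.2.le
      intro z hz
      have h1 : V' z ≤ 0 := by
        simp only [hV']
        simp only [neg_nonpos]
        apply div_nonneg one_pos.le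
        positivity
      have h2 : a z ≤ 0 := hanonpos z
      nlinarith
    have hVδ0 : 0 ≤ V δ := cot_half_nonneg' hδ.1 hδ.2.le
    have hVδ2 : V δ ≤ 2/δ := cot_half_le' hδ.1 hδ.2.le
    have haδ := habound δ hδ.1
    rw [abs_le] at haδ
    have hkey : -(4 * C₂ * δ) ≤ V δ * a δ := by
      have hδ0 := hδ.1
      have h1 : V δ * (-a δ) ≤ (2/δ) * (2 * C₂ * δ^2) :=
        mul_le_mul hVδ2 (by linarith [haδ.1]) (by linarith [hanonpos δ]) (by positivity)
      have h2 : (2/δ) * (2 * C₂ * δ^2) = 4 * C₂ * δ := by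
        rw [div_mul_eq_mul_div, div_eq_iff hδ0.ne']
        ring
      nlinarith
    rw [hEq, hIBP, hVπ]
    have haπ : a π ≤ 0 := hanonpos π
    simp only [zero_mul]
    linarith
  have htr := kk_tendsto hdd hC₂ x
  have h0 : Tendsto (fun δ : ℝ => -(4 * C₂ * δ)) (𝓝[>] (0:ℝ)) (𝓝 0) := by
    have hc : Tendsto (fun δ : ℝ => -(4 * C₂ * δ)) (𝓝 0) (𝓝 (-(4 * C₂ * 0))) :=
      (Continuous.tendsto (by fun_prop) 0)
    rw [show -(4 * C₂ * 0) = 0 by ring] at hc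
    exact hc.mono_left nhdsWithin_le_nhds
  exact le_of_tendsto_of_tendsto h0 htr
    (by filter_upwards [Ioo_mem_nhdsGT_of_mem ⟨le_refl (0:ℝ), hπ⟩] with δ hδ using hlow δ hδ)

lemma deriv_nonneg_at_max {f g : ℝ → ℝ} (hf : ContDiff ℝ ((⊤ : ℕ∞) : WithTop ℕ∞) f)
    (hp : Function.Periodic f (2*π))
    (hg : ∀ x : ℝ, Filter.Tendsto (fun ε : ℝ =>
        (1/(2*π)) * ∫ y in Set.Ioo (x - π) (x + π) \ Set.Ioo (x - ε) (x + ε),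
          f y * (Real.cos ((x - y)/2) / Real.sin ((x - y)/2)))
        (𝓝[>] 0) (𝓝 (g x)))
    {x : ℝ} (hmax : ∀ y, f y ≤ f x) : 0 ≤ deriv g x := by
  have hrep := g_eq hf hp hg
  have hJ := (J_hasDerivAt hf hp x).const_mul (1/(2*π))
  have hgd : HasDerivAt g ((1/(2*π)) * ∫ z in (0:ℝ)..π,
      (deriv f (x - z) - deriv f (x + z)) * (Real.cos (z/2) / Real.sin (z/2))) x := by
    rw [hrep]
    exact hJ
  rw [hgd.deriv]
  have hπ := Real.pi_pos
  exact mul_nonneg (by positivity) (Jderiv_nonneg hf hp hmax)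

lemma deriv_nonpos_at_min {f g : ℝ → ℝ} (hf : ContDiff ℝ ((⊤ : ℕ∞) : WithTop ℕ∞) f)
    (hp : Function.Periodic f (2*π))
    (hg : ∀ x : ℝ, Filter.Tendsto (fun ε : ℝ =>
        (1/(2*π)) * ∫ y in Set.Ioo (x - π) (x + π) \ Set.Ioo (x - ε) (x + ε),
          f y * (Real.cos ((x - y)/2) / Real.sin ((x - y)/2)))
        (𝓝[>] 0) (𝓝 (g x)))
    {x : ℝ} (hmin : ∀ y, f x ≤ f y) : deriv g x ≤ 0 := by
  have hg' : ∀ x : ℝ, Filter.Tendsto (fun ε : ℝ =>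
      (1/(2*π)) * ∫ y in Set.Ioo (x - π) (x + π) \ Set.Ioo (x - ε) (x + ε),
        (-f y) * (Real.cos ((x - y)/2) / Real.sin ((x - y)/2)))
      (𝓝[>] 0) (𝓝 (-g x)) := by
    intro x'
    have h1 := (hg x').neg
    apply h1.congr
    intro ε
    have h2 : (∫ y in Set.Ioo (x' - π) (x' + π) \ Set.Ioo (x' - ε) (x' + ε),
        (-f y) * (Real.cos ((x' - y)/2) / Real.sin ((x' - y)/2)))
        = -∫ y in Set.Ioo (x' - π) (x' + π) \ Set.Ioo (x' - ε) (x' + ε),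
          f y * (Real.cos ((x' - y)/2) / Real.sin ((x' - y)/2)) := by
      rw [← MeasureTheory.integral_neg]
      apply MeasureTheory.integral_congr_ae
      filter_upwards with y
      ring
    rw [h2]
    ring
  have hpneg : Function.Periodic (fun y => -f y) (2*π) := fun y => by simp [hp y]
  have := deriv_nonneg_at_max (f := fun y => -f y) (g := fun y => -g y) hf.neg hpneg hg'
    (x := x) (fun y => by simpa using hmin y)
  have hdn : deriv (fun y => -g y) x = -deriv g x := deriv.neg
  rw [hdn] at this
  linarith
end core

lemma left_max_deriv_nonneg {φ : ℝ → ℝ} {t d v : ℝ} (hd : HasDerivAt φ d t) (ht : 0 < t)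
    (hle : ∀ s, 0 ≤ s → s < t → φ s ≤ v) (hv : v ≤ φ t) : 0 ≤ d := by
  rw [hasDerivAt_iff_tendsto_slope] at hd
  have h2 : Tendsto (slope φ t) (𝓝[<] t) (𝓝 d) :=
    hd.mono_left (nhdsWithin_mono t (fun s hs => ne_of_lt hs))
  apply ge_of_tendsto h2
  filter_upwards [Ioo_mem_nhdsLT_of_mem (Set.mem_Ioc.mpr ⟨ht, le_refl t⟩)] with s hs
  rw [slope_def_field]
  have h3 : φ s ≤ v := hle s hs.1.le hs.2
  have h4 : s - t < 0 := by linarith [hs.2]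
  have h5 : φ s - φ t ≤ 0 := by linarith
  rw [div_nonneg_iff]
  exact Or.inr ⟨h5, h4.le⟩

lemma left_min_deriv_nonpos {φ : ℝ → ℝ} {t d v : ℝ} (hd : HasDerivAt φ d t) (ht : 0 < t)
    (hle : ∀ s, 0 ≤ s → s < t → v ≤ φ s) (hv : φ t ≤ v) : d ≤ 0 := by
  have := left_max_deriv_nonneg (v := -v) hd.neg ht
    (fun s hs hst => by simpa using neg_le_neg (hle s hs hst)) (by simpa using neg_le_neg hv)
  linarith

lemma exists_max_periodic {φ : ℝ → ℝ} (hc : Continuous φ) (hp : Function.Periodic φ (2*π)) :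
    ∃ x, ∀ y, φ y ≤ φ x := by
  obtain ⟨x, -, hxmax⟩ := isCompact_Icc.exists_isMaxOn
    (Set.nonempty_Icc.mpr (by positivity)) (hc.continuousOn (s := Icc 0 (2*π)))
  refine ⟨x, fun y => ?_⟩
  obtain ⟨y', hy', hyy⟩ := hp.exists_mem_Ico₀ (by positivity) y
  rw [hyy]
  exact hxmax ⟨hy'.1, hy'.2.le⟩

lemma exists_min_periodic {φ : ℝ → ℝ} (hc : Continuous φ) (hp : Function.Periodic φ (2*π)) :
    ∃ x, ∀ y, φ x ≤ φ y := by
  obtain ⟨x, hx⟩ := exists_max_periodic hc.neg (fun y => by simp [hp y] : Function.Periodic (fun z => -φ z) (2*π))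
  exact ⟨x, fun y => by have := hx y; simpa using this⟩

end MP

open MP in
/-- Maximum principle: a smooth `2π`-periodic solution of
`π∂_t u = ψ∂_x u − φΛu`, with `ψ = Hu/(u² + (Hu)²)`, `φ = u/(u² + (Hu)²)` and
`Λu = ∂_x(Hu)`, stays between the bounds `m₀` and `M₀` of its initial data. -/
theorem maximum_principle (u H : ℝ → ℝ → ℝ) (T m₀ M₀ : ℝ)
    (hT : 0 < T) (hm₀ : 0 < m₀)
    (husm : ContDiff ℝ (⊤ : ℕ∞) (Function.uncurry u))
    (hHsm : ContDiff ℝ (⊤ : ℕ∞) (Function.uncurry H))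
    (hper : ∀ t, Function.Periodic (u t) (2*π))
    (hH : ∀ t x : ℝ, Filter.Tendsto (fun ε : ℝ =>
        (1/(2*π)) * ∫ y in Set.Ioo (x - π) (x + π) \ Set.Ioo (x - ε) (x + ε),
          u t y * (Real.cos ((x - y)/2) / Real.sin ((x - y)/2)))
        (𝓝[>] 0) (𝓝 (H t x)))
    (heq : ∀ t ∈ Set.Icc (0:ℝ) T, ∀ x : ℝ,
      π * deriv (fun s => u s x) t =
        (H t x / ((u t x)^2 + (H t x)^2)) * deriv (u t) x
          - (u t x / ((u t x)^2 + (H t x)^2)) * deriv (H t) x)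
    (h0 : ∀ x : ℝ, m₀ ≤ u 0 x ∧ u 0 x ≤ M₀) :
    ∀ t ∈ Set.Icc (0:ℝ) T, ∀ x : ℝ, m₀ ≤ u t x ∧ u t x ≤ M₀ := by
  have hπ := Real.pi_pos
  have h2π : (0:ℝ) < 2*π := by positivity
  have hMm : m₀ ≤ M₀ := le_trans (h0 0).1 (h0 0).2
  have hucont : Continuous (Function.uncurry u) := husm.continuous
  have hucont' : Continuous fun p : ℝ×ℝ => u p.1 p.2 := hucont
  have huslice : ∀ t : ℝ, ContDiff ℝ ((⊤ : ℕ∞) : WithTop ℕ∞) (u t) := by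
    intro t
    have h1 : ContDiff ℝ ((⊤ : ℕ∞) : WithTop ℕ∞) (fun x => Function.uncurry u (t, x)) :=
      husm.comp (contDiff_const.prodMk contDiff_id)
    exact h1.of_le le_rfl
  have htslice : ∀ x : ℝ, ∀ s₀ : ℝ,
      HasDerivAt (fun s => u s x) (deriv (fun s => u s x) s₀) s₀ := by
    intro x s₀
    have hcd : ContDiff ℝ ((⊤ : ℕ∞) : WithTop ℕ∞) (fun s => Function.uncurry u (s, x)) :=
      husm.comp (contDiff_id.prodMk contDiff_const)
    exact ((hcd.differentiable (by simp)) s₀).hasDerivAt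
  have hrep : ∀ t y : ℝ, ∃ y' ∈ Icc (0:ℝ) (2*π), u t y = u t y' := by
    intro t y
    obtain ⟨y', hy', h⟩ := (hper t).exists_mem_Ico₀ h2π y
    exact ⟨y', ⟨hy'.1, hy'.2.le⟩, h⟩
  -- upper bound with slack
  have upper : ∀ ε : ℝ, 0 < ε → ∀ t ∈ Icc (0:ℝ) T, ∀ x : ℝ, u t x < M₀ + ε + ε*t := by
    intro ε hε
    by_contra hcon
    push_neg at hcon
    obtain ⟨t₁, ht₁, x₁, hx₁⟩ := hcon
    set S : Set ℝ := {t ∈ Icc (0:ℝ) T | ∃ x ∈ Icc (0:ℝ) (2*π), M₀ + ε + ε*t ≤ u t x} with hS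
    have hSne : S.Nonempty := by
      obtain ⟨x₁', hx₁'mem, hx₁'⟩ := hrep t₁ x₁
      exact ⟨t₁, ht₁, x₁', hx₁'mem, by rw [← hx₁']; exact hx₁⟩
    set K : Set (ℝ×ℝ) := (Icc (0:ℝ) T ×ˢ Icc (0:ℝ) (2*π)) ∩
        {p : ℝ×ℝ | M₀ + ε + ε*p.1 ≤ u p.1 p.2} with hK
    have hKcl : IsClosed {p : ℝ×ℝ | M₀ + ε + ε*p.1 ≤ u p.1 p.2} :=
      isClosed_le (by fun_prop) hucont'
    have hKc : IsCompact K := (isCompact_Icc.prod isCompact_Icc).inter_right hKcl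
    have hSK : S = Prod.fst '' K := by
      ext t
      constructor
      · rintro ⟨htI, x, hxI, hxle⟩
        exact ⟨(t, x), ⟨⟨htI, hxI⟩, hxle⟩, rfl⟩
      · rintro ⟨⟨t', x⟩, ⟨⟨htI, hxI⟩, hxle⟩, rfl⟩
        exact ⟨htI, x, hxI, hxle⟩
    have hScl : IsClosed S := by rw [hSK]; exact (hKc.image continuous_fst).isClosed
    have hSbdd : BddBelow S := ⟨0, fun s hs => hs.1.1⟩
    set t₀ := sInf S with ht₀
    have ht₀S : t₀ ∈ S := hScl.csInf_mem hSne hSbdd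
    obtain ⟨ht₀I, x₀, hx₀I, hx₀le⟩ := ht₀S
    have ht₀pos : 0 < t₀ := by
      rcases ht₀I.1.lt_or_eq with h | h
      · exact h
      · exfalso
        rw [← h] at hx₀le
        have h2 := (h0 x₀).2
        nlinarith
    have hbefore : ∀ s, 0 ≤ s → s < t₀ → ∀ y, u s y < M₀ + ε + ε*s := by
      intro s hs0 hst y
      by_contra hy
      push_neg at hy
      obtain ⟨y', hy'I, hy'⟩ := hrep s y
      have hsS : s ∈ S := ⟨⟨hs0, le_trans hst.le ht₀I.2⟩, y', hy'I, by rw [← hy']; exact hy⟩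
      exact absurd (csInf_le hSbdd hsS) (not_le.mpr hst)
    obtain ⟨xm, hxm⟩ := exists_max_periodic (huslice t₀).continuous (hper t₀)
    have htouch : M₀ + ε + ε*t₀ ≤ u t₀ xm := le_trans hx₀le (hxm x₀)
    have hd := htslice xm t₀
    have hφ : HasDerivAt (fun s => u s xm - ε*s) (deriv (fun s => u s xm) t₀ - ε) t₀ := by
      simpa [Pi.sub_def] using hd.sub ((hasDerivAt_id' t₀).const_mul ε)
    have hds : 0 ≤ deriv (fun s => u s xm) t₀ - ε := by
      apply left_max_deriv_nonneg (v := M₀ + ε) hφ ht₀pos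
      · intro s hs0 hst
        have := hbefore s hs0 hst xm
        nlinarith
      · linarith
    have hux : deriv (u t₀) xm = 0 :=
      IsLocalMax.deriv_eq_zero (Filter.Eventually.of_forall (fun y => hxm y))
    have hΛ : 0 ≤ deriv (H t₀) xm := deriv_nonneg_at_max (huslice t₀) (hper t₀) (hH t₀) hxm
    have hupos : 0 < u t₀ xm := by nlinarith
    have hden : 0 < (u t₀ xm)^2 + (H t₀ xm)^2 :=
      add_pos_of_pos_of_nonneg (pow_pos hupos 2) (sq_nonneg _)
    have hpde := heq t₀ ht₀I xm
    rw [hux, mul_zero] at hpde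
    have hterm : 0 ≤ (u t₀ xm / ((u t₀ xm)^2 + (H t₀ xm)^2)) * deriv (H t₀) xm :=
      mul_nonneg (div_nonneg hupos.le hden.le) hΛ
    have hfin : π * deriv (fun s => u s xm) t₀ ≤ 0 := by rw [hpde]; linarith
    nlinarith
  -- lower bound with slack
  have lower : ∀ ε : ℝ, 0 < ε → ε*(1+T) < m₀ →
      ∀ t ∈ Icc (0:ℝ) T, ∀ x : ℝ, m₀ - ε - ε*t < u t x := by
    intro ε hε hεT
    by_contra hcon
    push_neg at hcon
    obtain ⟨t₁, ht₁, x₁, hx₁⟩ := hcon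
    set S : Set ℝ := {t ∈ Icc (0:ℝ) T | ∃ x ∈ Icc (0:ℝ) (2*π), u t x ≤ m₀ - ε - ε*t} with hS
    have hSne : S.Nonempty := by
      obtain ⟨x₁', hx₁'mem, hx₁'⟩ := hrep t₁ x₁
      exact ⟨t₁, ht₁, x₁', hx₁'mem, by rw [← hx₁']; exact hx₁⟩
    set K : Set (ℝ×ℝ) := (Icc (0:ℝ) T ×ˢ Icc (0:ℝ) (2*π)) ∩
        {p : ℝ×ℝ | u p.1 p.2 ≤ m₀ - ε - ε*p.1} with hK
    have hKcl : IsClosed {p : ℝ×ℝ | u p.1 p.2 ≤ m₀ - ε - ε*p.1} :=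
      isClosed_le hucont' (by fun_prop)
    have hKc : IsCompact K := (isCompact_Icc.prod isCompact_Icc).inter_right hKcl
    have hSK : S = Prod.fst '' K := by
      ext t
      constructor
      · rintro ⟨htI, x, hxI, hxle⟩
        exact ⟨(t, x), ⟨⟨htI, hxI⟩, hxle⟩, rfl⟩
      · rintro ⟨⟨t', x⟩, ⟨⟨htI, hxI⟩, hxle⟩, rfl⟩
        exact ⟨htI, x, hxI, hxle⟩
    have hScl : IsClosed S := by rw [hSK]; exact (hKc.image continuous_fst).isClosed
    have hSbdd : BddBelow S := ⟨0, fun s hs => hs.1.1⟩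
    set t₀ := sInf S with ht₀
    have ht₀S : t₀ ∈ S := hScl.csInf_mem hSne hSbdd
    obtain ⟨ht₀I, x₀, hx₀I, hx₀le⟩ := ht₀S
    have ht₀pos : 0 < t₀ := by
      rcases ht₀I.1.lt_or_eq with h | h
      · exact h
      · exfalso
        rw [← h] at hx₀le
        have h2 := (h0 x₀).1
        nlinarith
    have hbefore : ∀ s, 0 ≤ s → s < t₀ → ∀ y, m₀ - ε - ε*s < u s y := by
      intro s hs0 hst y
      by_contra hy
      push_neg at hy
      obtain ⟨y', hy'I, hy'⟩ := hrep s y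
      have hsS : s ∈ S := ⟨⟨hs0, le_trans hst.le ht₀I.2⟩, y', hy'I, by rw [← hy']; exact hy⟩
      exact absurd (csInf_le hSbdd hsS) (not_le.mpr hst)
    obtain ⟨xm, hxm⟩ := exists_min_periodic (huslice t₀).continuous (hper t₀)
    have htouch : u t₀ xm ≤ m₀ - ε - ε*t₀ := le_trans (hxm x₀) hx₀le
    have hliml : m₀ - ε - ε*t₀ ≤ u t₀ xm := by
      have htd : Tendsto (fun s => u s xm) (𝓝[<] t₀) (𝓝 (u t₀ xm)) :=
        ((htslice xm t₀).continuousAt.continuousWithinAt).tendsto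
      apply ge_of_tendsto htd
      filter_upwards [Ioo_mem_nhdsLT_of_mem (Set.mem_Ioc.mpr ⟨ht₀pos, le_refl t₀⟩)] with s hs
      have := hbefore s hs.1.le hs.2 xm
      nlinarith [hs.2, hε]
    have hupos : 0 < u t₀ xm := by nlinarith [ht₀I.2, hε]
    have hd := htslice xm t₀
    have hφ : HasDerivAt (fun s => u s xm + ε*s) (deriv (fun s => u s xm) t₀ + ε) t₀ := by
      simpa [Pi.add_def] using hd.add ((hasDerivAt_id' t₀).const_mul ε)
    have hds : deriv (fun s => u s xm) t₀ + ε ≤ 0 := by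
      apply left_min_deriv_nonpos (v := m₀ - ε) hφ ht₀pos
      · intro s hs0 hst
        have := hbefore s hs0 hst xm
        nlinarith
      · linarith
    have hux : deriv (u t₀) xm = 0 :=
      IsLocalMin.deriv_eq_zero (Filter.Eventually.of_forall (fun y => hxm y))
    have hΛ : deriv (H t₀) xm ≤ 0 := deriv_nonpos_at_min (huslice t₀) (hper t₀) (hH t₀) hxm
    have hden : 0 < (u t₀ xm)^2 + (H t₀ xm)^2 :=
      add_pos_of_pos_of_nonneg (pow_pos hupos 2) (sq_nonneg _)
    have hpde := heq t₀ ht₀I xm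
    rw [hux, mul_zero] at hpde
    have hterm : (u t₀ xm / ((u t₀ xm)^2 + (H t₀ xm)^2)) * deriv (H t₀) xm ≤ 0 :=
      mul_nonpos_of_nonneg_of_nonpos (div_nonneg hupos.le hden.le) hΛ
    have hfin : 0 ≤ π * deriv (fun s => u s xm) t₀ := by rw [hpde]; linarith
    nlinarith
  -- conclude
  intro t ht x
  have h1T : (0:ℝ) < 1 + T := by linarith
  constructor
  · rw [← sub_nonneg, ← sub_nonpos]
    have hkey : ∀ δ : ℝ, 0 < δ → m₀ ≤ u t x + δ := by
      intro δ hδ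
      set ε := min (δ/(1+T)) (m₀/(2*(1+T))) with hε
      have hεpos : 0 < ε := lt_min (by positivity) (by positivity)
      have hε1 : ε ≤ δ/(1+T) := min_le_left _ _
      have hε2 : ε ≤ m₀/(2*(1+T)) := min_le_right _ _
      have hεT : ε*(1+T) < m₀ := by
        have : ε*(1+T) ≤ (m₀/(2*(1+T)))*(1+T) := by nlinarith
        rw [div_mul_eq_mul_div, mul_comm (2:ℝ) (1+T), ← div_div,
          mul_div_assoc, div_self h1T.ne', mul_one] at this
        linarith
      have hlow := lower ε hεpos hεT t ht x
      have hεδ : ε*(1+t) ≤ δ := by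
        have h2 : ε*(1+t) ≤ ε*(1+T) := by nlinarith [ht.2, hεpos]
        have h3 : ε*(1+T) ≤ (δ/(1+T))*(1+T) := by nlinarith
        rw [div_mul_cancel₀ _ h1T.ne'] at h3
        linarith
      nlinarith
    nlinarith [le_of_forall_pos_le_add hkey]
  · apply le_of_forall_pos_le_add
    intro δ hδ
    have hεpos : 0 < δ/(1+T) := by positivity
    have hup := upper (δ/(1+T)) hεpos t ht x
    have h3 : (δ/(1+T))*(1+T) = δ := div_mul_cancel₀ _ h1T.ne'
    nlinarith [ht.1, ht.2, hεpos]
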